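/- arXiv:2109.06040 — 9 statements merged into one kernel-verified Lean document; each statement's English description precedes it below -/
import Mathlib

section
/- Let X be a topological space and x ∈ X a point satisfying local 1-componency, i.e., for every open neighborhood U of x there is an open neighborhood N ⊆ U of x such that N \ {x} is connected (as a subspace). Then for every set P ⊆ X: if there is an open neighborhood U of x with U \ {x} ⊆ int(P) ∪ int(X \ P), then there is an open neighborhood V of x with V \ {x} ⊆ P or an open neighborhood W of x with W \ {x} ⊆ X \ P. -/
theorem kuratowski_of_locally_one_component {X : Type*} [TopologicalSpace X] (x : X)
    (h1c : ∀ U : Set X, IsOpen U → x ∈ U →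
      ∃ N : Set X, IsOpen N ∧ x ∈ N ∧ N ⊆ U ∧ IsPreconnected (N \ {x})) :
    ∀ P : Set X,
      (∃ U : Set X, IsOpen U ∧ x ∈ U ∧ U \ {x} ⊆ interior P ∪ interior Pᶜ) →
      (∃ V : Set X, IsOpen V ∧ x ∈ V ∧ V \ {x} ⊆ P) ∨
      (∃ W : Set X, IsOpen W ∧ x ∈ W ∧ W \ {x} ⊆ Pᶜ) := by
  intro P ⟨U, hU, hxU, hsub⟩
  obtain ⟨N, hN, hxN, hNU, hpc⟩ := h1c U hU hxU
  have hcov : N \ {x} ⊆ interior P ∪ interior Pᶜ := fun y hy =>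
    hsub ⟨hNU hy.1, hy.2⟩
  have hdisj : (N \ {x}) ∩ (interior P ∩ interior Pᶜ) = ∅ := by
    ext y
    simp only [Set.mem_inter_iff, Set.mem_empty_iff_false, iff_false]
    rintro ⟨-, h1, h2⟩
    exact (interior_subset h2) (interior_subset h1)
  by_cases hA : ((N \ {x}) ∩ interior P).Nonempty
  · by_cases hB : ((N \ {x}) ∩ interior Pᶜ).Nonempty
    · obtain ⟨y, hy⟩ := hpc (interior P) (interior Pᶜ) isOpen_interior
        isOpen_interior hcov hA hB
      rw [hdisj] at hy
      exact hy.elim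
    · left
      exact ⟨N, hN, hxN, fun y hy => interior_subset ((hcov hy).resolve_right
        (fun h => hB ⟨y, hy, h⟩))⟩
  · right
    exact ⟨N, hN, hxN, fun y hy => interior_subset ((hcov hy).resolve_left
      (fun h => hA ⟨y, hy, h⟩))⟩
end

section
/- Let X, Y be nonempty topological spaces, f : X → Y a surjective continuous open map, and P ⊆ Y. Suppose that whenever the set Y \ P is a singleton {y}, the preimage f⁻¹({y}) is a singleton. Then for all x ∈ X: (f⁻¹(P) ∪ {x} = X) if and only if (P ∪ {f(x)} = Y). -/
theorem diff_modality_preservation {X Y : Type*} [TopologicalSpace X] [TopologicalSpace Y]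
    [Nonempty X] [Nonempty Y] (f : X → Y) (hf : Function.Surjective f)
    (hcont : Continuous f) (hopen : IsOpenMap f) (P : Set Y)
    (hinj : ∀ y : Y, Pᶜ = {y} → ∃ x : X, f ⁻¹' {y} = {x}) :
    ∀ x : X, (f ⁻¹' P ∪ {x} = Set.univ) ↔ (P ∪ {f x} = Set.univ) := by
  intro x
  simp only [Set.eq_univ_iff_forall, Set.mem_union, Set.mem_preimage, Set.mem_singleton_iff]
  constructor
  · intro h y
    obtain ⟨z, rfl⟩ := hf y
    rcases h z with hz | rfl
    · exact Or.inl hz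
    · exact Or.inr rfl
  · intro h z
    rcases h (f z) with hz | hz
    · exact Or.inl hz
    · -- f z = f x, f z ∉ P or f z ∈ P
      by_cases hP : f z ∈ P
      · exact Or.inl hP
      · -- Pᶜ = {f x}
        have hcomp : Pᶜ = {f x} := by
          apply Set.eq_singleton_iff_unique_mem.mpr
          constructor
          · exact hz ▸ hP
          · intro y hy
            rcases h y with h1 | h1
            · exact absurd h1 hy
            · exact h1
        obtain ⟨w, hw⟩ := hinj _ hcomp
        have h1 : z ∈ f ⁻¹' {f x} := hz
        have h2 : x ∈ f ⁻¹' {f x} := rfl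
        rw [hw] at h1 h2
        exact Or.inr (h1.trans h2.symm)
end

section
/- Let 𝕏 = {(x, y) ∈ ℝ² : |y| ≤ |sin x|} with the subspace topology, and let f : 𝕏 → ℝ be the projection f(x, y) = x. Then f is a continuous, open, surjective map. -/
/-- The space `𝕏 = {(x, y) ∈ ℝ² : |y| ≤ |sin x|}` with the subspace topology. -/
def BraidSpace : Type := {p : ℝ × ℝ // |p.2| ≤ |Real.sin p.1|}

instance : TopologicalSpace BraidSpace := instTopologicalSpaceSubtype

/-!
Through every point `(x, y)` of `{|y| ≤ |h x|}` passes the continuous section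
`t ↦ (t, (y / h x) * h t)` of the projection, which stays in the region because `|y / h x| ≤ 1`.
A map admitting continuous sections through every point is open.
-/

lemma div_mul_cancel_of_abs_le_abs {y a : ℝ} (hya : |y| ≤ |a|) : y / a * a = y := by
  rcases eq_or_ne a 0 with rfl | ha
  · simpa [eq_comm] using hya
  · exact div_mul_cancel₀ y ha

lemma abs_div_mul_le_abs_of_abs_le_abs {y a : ℝ} (hya : |y| ≤ |a|) (b : ℝ) :
    |y / a * b| ≤ |b| := by
  rw [abs_mul, abs_div]
  exact mul_le_of_le_one_left (abs_nonneg b) (div_le_one_of_le₀ hya (abs_nonneg a))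

lemma isOpenMap_fst_of_abs_le {X : Type*} [TopologicalSpace X] {h : X → ℝ} (hh : Continuous h) :
    IsOpenMap (fun p : {p : X × ℝ // |p.2| ≤ |h p.1|} => p.1.1) := by
  refine IsOpenMap.of_sections fun ⟨⟨x, y⟩, hxy⟩ => ?_
  refine ⟨fun t => ⟨(t, y / h x * h t), abs_div_mul_le_abs_of_abs_le_abs hxy (h t)⟩,
    ?_, ?_, fun t => rfl⟩
  · exact (Continuous.subtype_mk (continuous_id.prodMk (continuous_const.mul hh)) _).continuousAt
  · simp only [div_mul_cancel_of_abs_le_abs hxy]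

lemma surjective_fst_of_abs_le {X : Type*} (h : X → ℝ) :
    Function.Surjective (fun p : {p : X × ℝ // |p.2| ≤ |h p.1|} => p.1.1) :=
  fun x => ⟨⟨(x, 0), by simp⟩, rfl⟩

theorem projection_interior_surjective :
    Continuous (fun p : BraidSpace => p.1.1) ∧
    IsOpenMap (fun p : BraidSpace => p.1.1) ∧
    Function.Surjective (fun p : BraidSpace => p.1.1) :=
  ⟨continuous_fst.comp continuous_subtype_val, isOpenMap_fst_of_abs_le Real.continuous_sin,
    surjective_fst_of_abs_le Real.sin⟩
end

section
/- For every finite set U ⊆ ℝ there exists a continuous, open, surjective map f : 𝕏 → ℝ such that for every u ∈ U the preimage f⁻¹({u}) is a singleton, where 𝕏 = {(x, y) ∈ ℝ² : |y| ≤ |sin x|} with the subspace topology. -/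
/-! The projection `(x, y) ↦ x` is a continuous open surjection `𝕏 → ℝ` whose fibre over every
zero of `sin` is a single point. Composing it with an order automorphism `h⁻¹` of `ℝ` that
carries the finite set `U` into the zeros of `sin` gives the map. Such an `h` is built one point
of `U` at a time, in increasing order: after the smaller points are placed, the map is bent by a
ramp `x ↦ x + c · max (x - t) 0` that fixes everything left of them and pushes the next point
onto a zero of `sin`. -/

open Filter Set

namespace BraidSpace

def proj (p : BraidSpace) : ℝ := p.val.1

theorem continuous_proj : Continuous proj :=
  continuous_fst.comp continuous_subtype_val

theorem surjective_proj : Function.Surjective proj :=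
  fun x => ⟨⟨(x, 0), by simp⟩, rfl⟩

/-- Through `(x₀, y₀)` passes the continuous section `x ↦ (x, y₀ clamped to [-|sin x|, |sin x|])`. -/
theorem isOpenMap_proj : IsOpenMap proj := by
  refine IsOpenMap.of_sections fun ⟨⟨x₀, y₀⟩, hp⟩ => ?_
  have hclamp : ∀ x : ℝ, |max (-|Real.sin x|) (min y₀ |Real.sin x|)| ≤ |Real.sin x| := fun x =>
    abs_le.2 ⟨le_max_left _ _, max_le (neg_le_self (abs_nonneg _)) (min_le_right _ _)⟩
  refine ⟨fun x => ⟨(x, _), hclamp x⟩, ?_, ?_, fun x => rfl⟩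
  · exact (Continuous.subtype_mk (by fun_prop) _).continuousAt
  · obtain ⟨hlo, hhi⟩ := abs_le.1 hp
    exact Subtype.ext (by simp [proj, min_eq_left hhi, max_eq_right hlo])

theorem proj_preimage_singleton {x : ℝ} (hx : Real.sin x = 0) :
    proj ⁻¹' {x} = {⟨(x, 0), by simp [hx]⟩} := by
  refine eq_singleton_iff_unique_mem.2 ⟨rfl, fun p (hp : p.val.1 = x) => Subtype.ext ?_⟩
  have hy := p.property
  rw [hp, hx, abs_zero, abs_nonpos_iff] at hy
  exact Prod.ext hp hy

end BraidSpace

theorem Real.exists_orderIso_eqOn_Iic {t y z : ℝ} (hty : t < y) (hyz : y ≤ z) :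
    ∃ φ : ℝ ≃o ℝ, EqOn φ id (Iic t) ∧ φ y = z := by
  set c := (z - y) / (y - t)
  have hc : 0 ≤ c := div_nonneg (sub_nonneg.2 hyz) (sub_pos.2 hty).le
  set g : ℝ → ℝ := fun x => x + c * max (x - t) 0
  have hg_left : EqOn g id (Iic t) := fun x (hx : x ≤ t) => by simp [g, hx]
  have hg_mono : StrictMono g := strictMono_id.add_monotone fun _ _ _ => by gcongr
  have hg_surj : Function.Surjective g := by
    refine Continuous.surjective (by fun_prop) ?_ ?_
    · exact tendsto_atTop_mono (fun x => le_add_of_nonneg_right (by positivity)) tendsto_id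
    · exact tendsto_id.congr' ((eventually_le_atBot t).mono fun x hx => (hg_left hx).symm)
  refine ⟨hg_mono.orderIsoOfSurjective g hg_surj, hg_left, ?_⟩
  show y + c * max (y - t) 0 = z
  rw [max_eq_left (sub_pos.2 hty).le, div_mul_cancel₀ _ (sub_pos.2 hty).ne']
  ring

theorem Real.exists_orderIso_mapsTo {Z : Set ℝ} (hZ : ∀ y, ∃ z ∈ Z, y ≤ z) {U : Set ℝ}
    (hU : U.Finite) : ∃ h : ℝ ≃o ℝ, MapsTo h U Z := by
  lift U to Finset ℝ using hU
  induction U using Finset.induction_on_max with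
  | empty => exact ⟨OrderIso.refl ℝ, by rw [Finset.coe_empty]; exact mapsTo_empty _ _⟩
  | insert a s hlt ih =>
    obtain ⟨h, hh⟩ := ih
    set t := (insert (a - 1) s).max' (Finset.insert_nonempty _ _)
    have hta : t < a := (Finset.max'_lt_iff _ _).2 fun u hu => by
      rcases Finset.mem_insert.1 hu with rfl | hu
      exacts [sub_one_lt a, hlt u hu]
    obtain ⟨z, hzZ, hz⟩ := hZ (h a)
    obtain ⟨φ, hφ, hφa⟩ := Real.exists_orderIso_eqOn_Iic (h.strictMono hta) hz
    refine ⟨h.trans φ, ?_⟩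
    intro u hu
    rcases Finset.mem_insert.1 hu with rfl | hu
    · simpa [hφa] using hzZ
    · have hut : h u ≤ h t := h.monotone (Finset.le_max' _ _ (Finset.mem_insert_of_mem hu))
      simpa [hφ hut] using hh hu

theorem Real.exists_sin_eq_zero_ge (y : ℝ) : ∃ z ∈ {x | Real.sin x = 0}, y ≤ z :=
  ⟨⌈y / Real.pi⌉ * Real.pi, Real.sin_int_mul_pi _,
    (div_le_iff₀ Real.pi_pos).1 (Int.le_ceil _)⟩

theorem braidSpace_gg_real (U : Set ℝ) (hU : U.Finite) :
    ∃ f : BraidSpace → ℝ, Continuous f ∧ IsOpenMap f ∧ Function.Surjective f ∧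
      ∀ u ∈ U, ∃ x : BraidSpace, f ⁻¹' {u} = {x} := by
  obtain ⟨h, hh⟩ := Real.exists_orderIso_mapsTo Real.exists_sin_eq_zero_ge hU
  refine ⟨h.symm ∘ BraidSpace.proj, h.symm.continuous.comp BraidSpace.continuous_proj,
    h.symm.toHomeomorph.isOpenMap.comp BraidSpace.isOpenMap_proj,
    h.symm.surjective.comp BraidSpace.surjective_proj,
    fun u hu => ⟨_, .trans ?_ (BraidSpace.proj_preimage_singleton (hh hu))⟩⟩
  rw [preimage_comp, ← image_singleton, ← h.image_eq_preimage_symm, image_singleton]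
end

section
/- Let 𝕏 = {(x, y) ∈ ℝ² : |y| ≤ |sin x|} with the subspace topology, and let (x₀, y₀) ∈ 𝕏 with x₀ not an integer multiple of π. Then (x₀, y₀) satisfies local 1-componency in 𝕏: for every open neighborhood U of (x₀, y₀) in 𝕏, there is an open neighborhood N ⊆ U of (x₀, y₀) such that N \ {(x₀, y₀)} is connected. -/
open Set Metric

theorem isConnected_prod_diff_singleton {X Y : Type*} [TopologicalSpace X]
    [TopologicalSpace Y] {S : Set X} {T : Set Y} (hS : IsPreconnected S)
    (hT : IsPreconnected T) {c : X × Y} {a : X} (ha : a ∈ S) (hac : a ≠ c.1) {b : Y}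
    (hb : b ∈ T) (hbc : b ≠ c.2) : IsConnected (S ×ˢ T \ {c}) := by
  refine ⟨⟨(a, b), ⟨ha, hb⟩, fun h => hac (congrArg Prod.fst h)⟩,
    isPreconnected_of_forall (a, b) ?_⟩
  rintro ⟨u, v⟩ ⟨⟨hu, hv⟩, huv⟩
  by_cases hu' : u = c.1
  · have hv' : v ≠ c.2 := fun h => huv (Prod.ext hu' h)
    refine ⟨S ×ˢ {v} ∪ {a} ×ˢ T, ?_, Or.inr ⟨rfl, hb⟩, Or.inl ⟨hu, rfl⟩,
      (hS.prod isPreconnected_singleton).union (a, v) ⟨ha, rfl⟩ ⟨rfl, hv⟩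
        (isPreconnected_singleton.prod hT)⟩
    rintro ⟨x, y⟩ (⟨hx, rfl : y = v⟩ | ⟨rfl : x = a, hy⟩)
    · exact ⟨⟨hx, hv⟩, fun h => hv' (congrArg Prod.snd h)⟩
    · exact ⟨⟨ha, hy⟩, fun h => hac (congrArg Prod.fst h)⟩
  · refine ⟨{u} ×ˢ T ∪ S ×ˢ {b}, ?_, Or.inr ⟨ha, rfl⟩, Or.inl ⟨rfl, hv⟩,
      (isPreconnected_singleton.prod hT).union (u, b) ⟨rfl, hb⟩ ⟨hu, rfl⟩
        (hS.prod isPreconnected_singleton)⟩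
    rintro ⟨x, y⟩ (⟨rfl : x = u, hy⟩ | ⟨hx, rfl : y = b⟩)
    · exact ⟨⟨hu, hy⟩, fun h => hu' (congrArg Prod.fst h)⟩
    · exact ⟨⟨hx, hb⟩, fun h => hbc (congrArg Prod.snd h)⟩

theorem exists_ne_mem_ball_inter_Icc {a b s r : ℝ} (hab : a < b) (hs : s ∈ Icc a b)
    (hr : 0 < r) : ∃ t ∈ ball s r ∩ Icc a b, t ≠ s := by
  obtain ⟨ε, hε, hεr, hεab⟩ : ∃ ε, 0 < ε ∧ ε < r ∧ ε < (b - a) / 2 :=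
    ⟨min r ((b - a) / 2) / 2, by positivity,
      by linarith [min_le_left r ((b - a) / 2)], by linarith [min_le_right r ((b - a) / 2)]⟩
  rcases le_or_gt s ((a + b) / 2) with h | h
  · refine ⟨s + ε, ⟨?_, ?_, ?_⟩, by linarith⟩
    · rw [mem_ball, Real.dist_eq, add_sub_cancel_left, abs_of_pos hε]; exact hεr
    all_goals linarith [hs.1, hs.2]
  · refine ⟨s - ε, ⟨?_, ?_, ?_⟩, by linarith⟩
    · rw [mem_ball, Real.dist_eq, sub_sub_cancel_left, abs_neg, abs_of_pos hε]; exact hεr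
    all_goals linarith [hs.1, hs.2]

namespace BraidSpace

open Real

-- Clamping `s` to `[-1, 1]` makes this a continuous map on all of `ℝ²`.
noncomputable def ofStrip (q : ℝ × ℝ) : BraidSpace :=
  ⟨(q.1, projIcc (-1) 1 (by norm_num) q.2 * sin q.1), by
    rw [abs_mul]
    exact mul_le_of_le_one_left (abs_nonneg _) (abs_le.2 (projIcc (-1) 1 _ q.2).2)⟩

noncomputable def toStrip (p : BraidSpace) : ℝ × ℝ := (p.1.1, p.1.2 / sin p.1.1)

theorem continuous_ofStrip : Continuous ofStrip :=
  Continuous.subtype_mk (by fun_prop) _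

theorem continuousOn_toStrip : ContinuousOn toStrip {p | sin p.1.1 ≠ 0} := by
  refine (continuous_fst.comp continuous_subtype_val).continuousOn.prodMk ?_
  exact ContinuousOn.div (by fun_prop) (by fun_prop) fun p hp => hp

theorem toStrip_mem_Icc (p : BraidSpace) : (toStrip p).2 ∈ Icc (-1) 1 := by
  rw [mem_Icc, ← abs_le, toStrip, abs_div]
  exact div_le_one_of_le₀ p.2 (abs_nonneg _)

theorem val_ofStrip {q : ℝ × ℝ} (hq : q.2 ∈ Icc (-1) 1) :
    (ofStrip q).1 = (q.1, q.2 * sin q.1) := by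
  simp [ofStrip, projIcc_of_mem _ hq]

theorem toStrip_ofStrip {q : ℝ × ℝ} (hq : sin q.1 ≠ 0) (hq' : q.2 ∈ Icc (-1) 1) :
    toStrip (ofStrip q) = q := by
  simp [toStrip, val_ofStrip hq', hq]

theorem ofStrip_toStrip {p : BraidSpace} (hp : sin p.1.1 ≠ 0) : ofStrip (toStrip p) = p := by
  apply Subtype.ext
  rw [val_ofStrip (toStrip_mem_Icc p)]
  simp [toStrip, div_mul_cancel₀ _ hp]

theorem image_ofStrip {S T : Set ℝ} (hS : ∀ x ∈ S, sin x ≠ 0) :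
    ofStrip '' (S ×ˢ (T ∩ Icc (-1) 1)) = toStrip ⁻¹' (S ×ˢ T) := by
  ext p
  constructor
  · rintro ⟨q, ⟨hq₁, hq₂, hq⟩, rfl⟩
    rw [mem_preimage, toStrip_ofStrip (hS _ hq₁) hq]
    exact ⟨hq₁, hq₂⟩
  · rintro ⟨hp₁, hp₂⟩
    exact ⟨toStrip p, ⟨hp₁, hp₂, toStrip_mem_Icc p⟩, ofStrip_toStrip (hS _ hp₁)⟩

theorem isOpen_image_ofStrip {S T : Set ℝ} (hS : IsOpen S) (hT : IsOpen T)
    (hS₀ : ∀ x ∈ S, sin x ≠ 0) : IsOpen (ofStrip '' (S ×ˢ (T ∩ Icc (-1) 1))) := by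
  have hsub : toStrip ⁻¹' (S ×ˢ T) ⊆ {p | sin p.1.1 ≠ 0} := fun p hp => hS₀ _ hp.1
  rw [image_ofStrip hS₀, ← inter_eq_right.2 hsub]
  exact continuousOn_toStrip.isOpen_inter_preimage
    (isOpen_ne_fun (by fun_prop) continuous_const) (hS.prod hT)

end BraidSpace

open BraidSpace in
theorem braidSpace_locally_one_component_away_from_pinch (p : BraidSpace)
    (hp : ∀ n : ℤ, p.1.1 ≠ n * Real.pi) :
    ∀ U : Set BraidSpace, IsOpen U → p ∈ U →
      ∃ N : Set BraidSpace, IsOpen N ∧ p ∈ N ∧ N ⊆ U ∧ IsConnected (N \ {p}) := by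
  intro U hU hpU
  have hsin : Real.sin p.1.1 ≠ 0 := Real.sin_ne_zero_iff.2 fun n h => hp n h.symm
  set c := toStrip p
  have hc : ofStrip c = p := ofStrip_toStrip hsin
  have hV : IsOpen (ofStrip ⁻¹' U ∩ {q | Real.sin q.1 ≠ 0}) :=
    (hU.preimage continuous_ofStrip).inter (isOpen_ne_fun (by fun_prop) continuous_const)
  obtain ⟨r, hr, hball⟩ := isOpen_iff.1 hV c ⟨by rwa [mem_preimage, hc], hsin⟩
  rw [← ball_prod_same] at hball
  set K := ball c.1 r ×ˢ (ball c.2 r ∩ Icc (-1) 1)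
  have hS₀ : ∀ x ∈ ball c.1 r, Real.sin x ≠ 0 := fun x hx =>
    (hball (mk_mem_prod hx (mem_ball_self hr))).2
  have hcK : c ∈ K := ⟨mem_ball_self hr, mem_ball_self hr, toStrip_mem_Icc p⟩
  have hinj : InjOn ofStrip K :=
    LeftInvOn.injOn fun q hq => toStrip_ofStrip (hS₀ _ hq.1) hq.2.2
  have ha : c.1 + r / 2 ∈ ball c.1 r := by
    rw [mem_ball, Real.dist_eq, add_sub_cancel_left, abs_of_pos (half_pos hr)]
    exact half_lt_self hr
  obtain ⟨b, hb, hbc⟩ := exists_ne_mem_ball_inter_Icc (by norm_num) (toStrip_mem_Icc p) hr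
  refine ⟨ofStrip '' K, isOpen_image_ofStrip isOpen_ball isOpen_ball hS₀, ⟨c, hcK, hc⟩, ?_, ?_⟩
  · rintro _ ⟨q, hq, rfl⟩
    exact (hball ⟨hq.1, hq.2.1⟩).1
  · rw [← hc, ← image_singleton, ← hinj.image_sdiff_subset (singleton_subset_iff.2 hcK)]
    exact (isConnected_prod_diff_singleton (convex_ball _ _).isPreconnected
      ((convex_ball _ _).inter (convex_Icc _ _)).isPreconnected ha (by linarith) hb hbc).image _
        continuous_ofStrip.continuousOn
end

section
/- Every point of 𝕏 = {(x, y) ∈ ℝ² : |y| ≤ |sin x|} (subspace topology) has an open neighborhood N such that every point of N other than the point itself satisfies local 1-componency in 𝕏. (Equivalently, the set of points of 𝕏 failing local 1-componency — the pinch points (nπ, 0) — is discrete: every point has a punctured neighborhood avoiding it.) -/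
/-- A point `z` of a space satisfies local 1-componency if every open neighborhood of `z`
contains an open neighborhood `N` of `z` with `N \ {z}` connected. -/
def LocallyOneComponentAt {X : Type*} [TopologicalSpace X] (z : X) : Prop :=
  ∀ U : Set X, IsOpen U → z ∈ U →
    ∃ N : Set X, IsOpen N ∧ z ∈ N ∧ N ⊆ U ∧ IsConnected (N \ {z})

/-!
Away from the zeros of `sin`, `𝕏` is locally the region `|y| ≤ f x` below the graph of a
continuous function `f = |sin|` with `f a > 0`. In a small box around such a point `z = (a, b)`
this region is a comb: it contains a horizontal spine `I × {c}`, and every point of it reaches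
the spine by a vertical segment inside it. When `z` lies on the boundary curve it is an endpoint
of its vertical fibre, so deleting it leaves a comb whose spine is on the inner side of `z`. When
`z` is interior, the punctured box is the union of two overlapping combs, with spines above and
below `z`. Finally the zeros of the analytic function `sin` are isolated.
-/

open Set Filter Topology

theorem isPreconnected_of_vertical_segments {S : Set (ℝ × ℝ)} {I : Set ℝ} {c : ℝ}
    (hI : IsPreconnected I) (hspine : I ×ˢ {c} ⊆ S)
    (hseg : ∀ p ∈ S, p.1 ∈ I ∧ {p.1} ×ˢ uIcc p.2 c ⊆ S) : IsPreconnected S := by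
  have tooth (x y : ℝ) : IsPreconnected ({x} ×ˢ uIcc y c) :=
    isPreconnected_singleton.prod isPreconnected_uIcc
  refine isPreconnected_of_forall_pair fun p hp q hq => ?_
  obtain ⟨hpI, hpS⟩ := hseg p hp
  obtain ⟨hqI, hqS⟩ := hseg q hq
  refine ⟨{p.1} ×ˢ uIcc p.2 c ∪ (I ×ˢ {c} ∪ {q.1} ×ˢ uIcc q.2 c),
    union_subset hpS (union_subset hspine hqS), Or.inl ⟨rfl, left_mem_uIcc⟩,
    Or.inr (Or.inr ⟨rfl, left_mem_uIcc⟩), ?_⟩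
  exact IsPreconnected.union (p.1, c) ⟨rfl, right_mem_uIcc⟩ (Or.inl ⟨hpI, rfl⟩) (tooth _ _)
    (IsPreconnected.union (q.1, c) ⟨hqI, rfl⟩ ⟨rfl, right_mem_uIcc⟩
      (hI.prod isPreconnected_singleton) (tooth _ _))

theorem isConnected_prod_inter_abs_le_diff {f : ℝ → ℝ} {I J K : Set ℝ} {a c : ℝ}
    (hI : IsConnected I) (hJ : OrdConnected J) (hcJ : c ∈ J) (hcf : ∀ x ∈ I, |c| ≤ f x)
    (hcK : c ∉ K) (hK : StarConvex ℝ c Kᶜ) :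
    IsConnected ((I ×ˢ J ∩ {p | |p.2| ≤ f p.1}) \ {a} ×ˢ K) := by
  have hspine : I ×ˢ {c} ⊆ (I ×ˢ J ∩ {p | |p.2| ≤ f p.1}) \ {a} ×ˢ K := by
    rintro ⟨x, _⟩ ⟨hx, rfl⟩
    exact ⟨⟨⟨hx, hcJ⟩, hcf x hx⟩, fun h => hcK h.2⟩
  obtain ⟨x₀, hx₀⟩ := hI.nonempty
  refine ⟨⟨(x₀, c), hspine ⟨hx₀, rfl⟩⟩, isPreconnected_of_vertical_segments hI.isPreconnected
    hspine ?_⟩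
  rintro ⟨x, y⟩ ⟨⟨⟨hx, hy⟩, hyf⟩, hyK⟩
  refine ⟨hx, ?_⟩
  rintro ⟨x', t⟩ ⟨hx', ht⟩
  obtain rfl : x = x' := hx'.symm
  have htf : t ∈ Icc (-f x) (f x) :=
    ordConnected_Icc.uIcc_subset (abs_le.mp hyf) (abs_le.mp (hcf x hx)) ht
  refine ⟨⟨⟨hx, hJ.uIcc_subset hy hcJ ht⟩, abs_le.mpr htf⟩, ?_⟩
  rintro ⟨rfl, htK⟩
  exact hK.segment_subset (fun h => hyK ⟨rfl, h⟩) (by rwa [segment_eq_uIcc, uIcc_comm]) htK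

theorem diff_singleton_eq_diff_singleton_prod {T : Set (ℝ × ℝ)} {K : Set ℝ} {a b : ℝ}
    (hbK : b ∈ K) (hK : ∀ y ∈ K, (a, y) ∈ T → y = b) : T \ {(a, b)} = T \ {a} ×ˢ K := by
  refine Subset.antisymm ?_ (sdiff_subset_sdiff_right (singleton_subset_iff.mpr ⟨rfl, hbK⟩))
  rintro ⟨x, y⟩ ⟨hT, hne⟩
  refine ⟨hT, ?_⟩
  rintro ⟨rfl, hy⟩
  exact hne (congrArg _ (hK y hy hT))

section Box

variable {f : ℝ → ℝ} {a b δ ε : ℝ}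

theorem isConnected_box_inter_abs_le_diff_of_lt (hδ : 0 < δ) (hε : 0 < ε)
    (hf : ∀ x ∈ Ioo (a - δ) (a + δ), |b| + ε / 2 ≤ f x) :
    IsConnected ((Ioo (a - δ) (a + δ) ×ˢ Ioo (b - ε) (b + ε) ∩ {p | |p.2| ≤ f p.1}) \
      {(a, b)}) := by
  set T := Ioo (a - δ) (a + δ) ×ˢ Ioo (b - ε) (b + ε) ∩ {p : ℝ × ℝ | |p.2| ≤ f p.1}
  have hspine (c : ℝ) (hc : |c - b| ≤ ε / 2) (x) (hx : x ∈ Ioo (a - δ) (a + δ)) : |c| ≤ f x := by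
    calc |c| = |b + (c - b)| := by ring_nf
      _ ≤ |b| + |c - b| := abs_add_le _ _
      _ ≤ f x := by linarith [hf x hx]
  have hup : IsConnected (T \ {a} ×ˢ Iic b) :=
    isConnected_prod_inter_abs_le_diff (c := b + ε / 2) (isConnected_Ioo (by linarith))
      ordConnected_Ioo ⟨by linarith, by linarith⟩
      (hspine _ (by rw [add_sub_cancel_left, abs_of_pos (by linarith)]))
      (by simp only [mem_Iic, not_le]; linarith)
      (by rw [compl_Iic]; exact (convex_Ioi b).starConvex (by simp only [mem_Ioi]; linarith))
  have hdown : IsConnected (T \ {a} ×ˢ Ici b) :=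
    isConnected_prod_inter_abs_le_diff (c := b - ε / 2) (isConnected_Ioo (by linarith))
      ordConnected_Ioo ⟨by linarith, by linarith⟩
      (hspine _ (by rw [sub_sub_cancel_left, abs_neg, abs_of_pos (by linarith)]))
      (by simp only [mem_Ici, not_le]; linarith)
      (by rw [compl_Ici]; exact (convex_Iio b).starConvex (by simp only [mem_Iio]; linarith))
  have hmeet : (a + δ / 2, b) ∈ (T \ {a} ×ˢ Iic b) ∩ (T \ {a} ×ˢ Ici b) := by
    have hx : a + δ / 2 ∈ Ioo (a - δ) (a + δ) := ⟨by linarith, by linarith⟩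
    have hT : (a + δ / 2, b) ∈ T :=
      ⟨⟨hx, by linarith, by linarith⟩, show |b| ≤ _ by linarith [hf _ hx]⟩
    have hne : a + δ / 2 ≠ a := by linarith
    exact ⟨⟨hT, fun h => hne h.1⟩, ⟨hT, fun h => hne h.1⟩⟩
  rw [← singleton_prod_singleton, ← Icc_self b, ← Iic_inter_Ici, prod_inter, sdiff_inter]
  exact hup.union ⟨_, hmeet⟩ hdown

theorem isConnected_box_inter_abs_le_diff_of_eq (hδ : 0 < δ) (hε : 0 < ε) (hεb : ε ≤ |b|)
    (hb : |b| = f a) (hf : ∀ x ∈ Ioo (a - δ) (a + δ), |b| - ε / 2 ≤ f x) :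
    IsConnected ((Ioo (a - δ) (a + δ) ×ˢ Ioo (b - ε) (b + ε) ∩ {p | |p.2| ≤ f p.1}) \
      {(a, b)}) := by
  have hI : IsConnected (Ioo (a - δ) (a + δ)) := isConnected_Ioo (by linarith)
  rcases lt_or_gt_of_ne (show b ≠ 0 by rintro rfl; simp at hεb; linarith) with hneg | hpos
  · rw [abs_of_neg hneg] at hεb hb hf
    rw [diff_singleton_eq_diff_singleton_prod self_mem_Iic fun y hyK hy => ?_]
    · refine isConnected_prod_inter_abs_le_diff (c := b + ε / 2) hI ordConnected_Ioo
        ⟨by linarith, by linarith⟩ (fun x hx => ?_) (by simp only [mem_Iic, not_le]; linarith)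
        (by rw [compl_Iic]; exact (convex_Ioi b).starConvex (by simp only [mem_Ioi]; linarith))
      rw [abs_of_neg (by linarith)]
      linarith [hf x hx]
    · have : |y| ≤ -b := hb ▸ hy.2
      linarith [neg_abs_le y, mem_Iic.mp hyK]
  · rw [abs_of_pos hpos] at hεb hb hf
    rw [diff_singleton_eq_diff_singleton_prod self_mem_Ici fun y hyK hy => ?_]
    · refine isConnected_prod_inter_abs_le_diff (c := b - ε / 2) hI ordConnected_Ioo
        ⟨by linarith, by linarith⟩ (fun x hx => ?_) (by simp only [mem_Ici, not_le]; linarith)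
        (by rw [compl_Ici]; exact (convex_Iio b).starConvex (by simp only [mem_Iio]; linarith))
      rw [abs_of_nonneg (by linarith)]
      linarith [hf x hx]
    · have : |y| ≤ b := hb ▸ hy.2
      linarith [le_abs_self y, mem_Ici.mp hyK]

end Box

theorem exists_isOpen_isConnected_inter_abs_le_diff {f : ℝ → ℝ} {a b : ℝ}
    (hf : ContinuousAt f a) (ha : 0 < f a) (hb : |b| ≤ f a) {V : Set (ℝ × ℝ)}
    (hV : V ∈ 𝓝 (a, b)) :
    ∃ W, IsOpen W ∧ (a, b) ∈ W ∧ W ⊆ V ∧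
      IsConnected ((W ∩ {p : ℝ × ℝ | |p.2| ≤ f p.1}) \ {(a, b)}) := by
  obtain ⟨⟨δ₀, ε₀⟩, ⟨hδ₀, hε₀⟩, hbox⟩ :=
    ((nhds_basis_Ioo_pos a).prod_nhds (nhds_basis_Ioo_pos b)).mem_iff.mp hV
  suffices ∃ ε, 0 < ε ∧ ε ≤ ε₀ ∧ ∀ δ > 0, (∀ x ∈ Ioo (a - δ) (a + δ), f a - ε / 2 ≤ f x) →
      IsConnected ((Ioo (a - δ) (a + δ) ×ˢ Ioo (b - ε) (b + ε) ∩ {p | |p.2| ≤ f p.1}) \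
        {(a, b)}) by
    obtain ⟨ε, hε, hεε₀, hconn⟩ := this
    have hnear : {x | f a - ε / 2 < f x} ∩ Ioo (a - δ₀) (a + δ₀) ∈ 𝓝 a :=
      inter_mem (hf.preimage_mem_nhds (Ioi_mem_nhds (by linarith)))
        (Ioo_mem_nhds (by linarith) (by linarith))
    obtain ⟨δ, hδ, hδnear⟩ := (nhds_basis_Ioo_pos a).mem_iff.mp hnear
    refine ⟨Ioo (a - δ) (a + δ) ×ˢ Ioo (b - ε) (b + ε), isOpen_Ioo.prod isOpen_Ioo,
      ⟨⟨by linarith, by linarith⟩, ⟨by linarith, by linarith⟩⟩,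
      (Set.prod_mono (fun x hx => (hδnear hx).2)
        (Ioo_subset_Ioo (by linarith) (by linarith))).trans hbox,
      hconn δ hδ fun x hx => (hδnear hx).1.le⟩
  rcases hb.lt_or_eq with hlt | heq
  · refine ⟨min ε₀ (f a - |b|), lt_min hε₀ (by linarith), min_le_left _ _, fun δ hδ hδf => ?_⟩
    refine isConnected_box_inter_abs_le_diff_of_lt hδ (lt_min hε₀ (by linarith)) fun x hx => ?_
    linarith [hδf x hx, min_le_right ε₀ (f a - |b|)]
  · exact ⟨min ε₀ (f a), lt_min hε₀ ha, min_le_left _ _, fun δ hδ hδf =>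
      isConnected_box_inter_abs_le_diff_of_eq hδ (lt_min hε₀ ha) (heq ▸ min_le_right _ _) heq
        (heq ▸ hδf)⟩

theorem locallyOneComponentAt_subtype_of_forall_nhds {X : Type*} [TopologicalSpace X]
    {s : Set X} (z : s)
    (h : ∀ V ∈ 𝓝 (z : X), ∃ W, IsOpen W ∧ (z : X) ∈ W ∧ W ⊆ V ∧ IsConnected ((W ∩ s) \ {↑z})) :
    LocallyOneComponentAt z := by
  intro U hU hzU
  obtain ⟨V, hV, rfl⟩ := isOpen_induced_iff.mp hU
  obtain ⟨W, hW, hzW, hWV, hconn⟩ := h V (hV.mem_nhds hzU)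
  refine ⟨((↑) : s → X) ⁻¹' W, hW.preimage continuous_subtype_val, hzW, preimage_mono hWV, ?_⟩
  have himage : ((↑) '' ((↑) ⁻¹' W \ {z}) : Set X) = (W ∩ s) \ {↑z} := by
    rw [image_sdiff Subtype.val_injective, Subtype.image_preimage_coe, image_singleton,
      inter_comm]
  rw [← himage] at hconn
  exact ⟨hconn.nonempty.of_image, IsInducing.subtypeVal.isPreconnected_image.mp hconn.2⟩

theorem BraidSpace.snd_eq_zero_of_sin_eq_zero (q : BraidSpace) (hq : Real.sin q.1.1 = 0) :
    q.1.2 = 0 := by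
  simpa [hq] using q.2

theorem BraidSpace.locallyOneComponentAt_of_sin_ne_zero (q : BraidSpace)
    (hq : Real.sin q.1.1 ≠ 0) : LocallyOneComponentAt q :=
  locallyOneComponentAt_subtype_of_forall_nhds (s := {p : ℝ × ℝ | |p.2| ≤ |Real.sin p.1|}) q
    fun _ hV => exists_isOpen_isConnected_inter_abs_le_diff Real.continuous_sin.abs.continuousAt
      (abs_pos.mpr hq) q.2 hV

theorem Real.eventually_sin_ne_zero (a : ℝ) : ∀ᶠ x in 𝓝[≠] a, Real.sin x ≠ 0 := by
  have h : Real.sin ⁻¹' {0}ᶜ ∈ codiscrete ℝ :=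
    Real.analyticOnNhd_sin.preimage_zero_mem_codiscrete (x := Real.pi / 2) (by simp)
  have := disjoint_principal_right.mp (mem_codiscrete.mp h a)
  rwa [compl_compl] at this

theorem braidSpace_failure_set_discrete (p : BraidSpace) :
    ∃ N : Set BraidSpace, IsOpen N ∧ p ∈ N ∧
      ∀ q ∈ N, q ≠ p → LocallyOneComponentAt q := by
  obtain ⟨O, hO, hpO, hsin⟩ := mem_nhdsWithin.mp (Real.eventually_sin_ne_zero p.1.1)
  refine ⟨{q | q.1.1 ∈ O}, hO.preimage (continuous_fst.comp continuous_subtype_val), hpO,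
    fun q hqO hqp => q.locallyOneComponentAt_of_sin_ne_zero fun hq => hqp ?_⟩
  have hx : q.1.1 = p.1.1 := by
    by_contra hne
    exact hsin ⟨hqO, hne⟩ hq
  exact Subtype.ext (Prod.ext hx ((q.snd_eq_zero_of_sin_eq_zero hq).trans
    (p.snd_eq_zero_of_sin_eq_zero (hx ▸ hq)).symm))
end

section
/- Let P = {x ∈ ℝ : ∃ n ≥ 0, 2^{-2n-1} < x < 2^{-2n}}. Then for every punctured neighborhood of 0 in ℝ (i.e., for every open U ∋ 0) there exists x ∈ U \ {0} such that: (a) some open neighborhood N of x satisfies N \ {x} ⊆ int(P) ∪ int(ℝ \ P), but (b) no open neighborhood V of x satisfies V \ {x} ⊆ P, and no open neighborhood W of x satisfies W \ {x} ⊆ ℝ \ P. -/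
private def Pset : Set ℝ :=
  {y : ℝ | ∃ n : ℕ, (2:ℝ) ^ (-(2 * (n:ℤ)) - 1) < y ∧ y < (2:ℝ) ^ (-(2 * (n:ℤ)))}

private lemma gap_not_mem (n : ℕ) {t : ℝ}
    (h1 : (2:ℝ) ^ (-(2 * (n:ℤ)) - 2) < t) (h2 : t < (2:ℝ) ^ (-(2 * (n:ℤ)) - 1)) :
    t ∉ Pset := by
  rintro ⟨m, hm1, hm2⟩
  rcases le_or_gt m n with h | h
  · have : (2:ℝ) ^ (-(2 * (n:ℤ)) - 1) ≤ 2 ^ (-(2 * (m:ℤ)) - 1) :=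
      zpow_le_zpow_right₀ one_le_two (by omega)
    linarith
  · have : (2:ℝ) ^ (-(2 * (m:ℤ))) ≤ 2 ^ (-(2 * (n:ℤ)) - 2) :=
      zpow_le_zpow_right₀ one_le_two (by omega)
    linarith

theorem boxKur_fails_at_zero :
    ∀ U : Set ℝ, IsOpen U → (0 : ℝ) ∈ U →
      ∃ x ∈ U, x ≠ 0 ∧
        (∃ N : Set ℝ, IsOpen N ∧ x ∈ N ∧
          N \ {x} ⊆ interior {y : ℝ | ∃ n : ℕ, (2:ℝ) ^ (-(2 * (n:ℤ)) - 1) < y ∧ y < (2:ℝ) ^ (-(2 * (n:ℤ)))}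
            ∪ interior {y : ℝ | ∃ n : ℕ, (2:ℝ) ^ (-(2 * (n:ℤ)) - 1) < y ∧ y < (2:ℝ) ^ (-(2 * (n:ℤ)))}ᶜ) ∧
        (∀ V : Set ℝ, IsOpen V → x ∈ V →
          ¬ (V \ {x} ⊆ {y : ℝ | ∃ n : ℕ, (2:ℝ) ^ (-(2 * (n:ℤ)) - 1) < y ∧ y < (2:ℝ) ^ (-(2 * (n:ℤ)))})) ∧
        (∀ W : Set ℝ, IsOpen W → x ∈ W →
          ¬ (W \ {x} ⊆ {y : ℝ | ∃ n : ℕ, (2:ℝ) ^ (-(2 * (n:ℤ)) - 1) < y ∧ y < (2:ℝ) ^ (-(2 * (n:ℤ)))}ᶜ)) := by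
  intro U hU hU0
  obtain ⟨ε, hε, hball⟩ := Metric.isOpen_iff.mp hU 0 hU0
  obtain ⟨n, hn⟩ := exists_pow_lt_of_lt_one hε (by norm_num : (1/2:ℝ) < 1)
  set lo : ℝ := 2 ^ (-(2 * (n:ℤ)) - 2) with hlo_def
  set x : ℝ := 2 ^ (-(2 * (n:ℤ)) - 1) with hx_def
  set hi : ℝ := 2 ^ (-(2 * (n:ℤ))) with hhi_def
  have hlx : lo < x := zpow_lt_zpow_right₀ one_lt_two (by omega)
  have hxh : x < hi := zpow_lt_zpow_right₀ one_lt_two (by omega)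
  have hxpos : (0:ℝ) < x := zpow_pos (by norm_num) _
  have hlopos : (0:ℝ) < lo := zpow_pos (by norm_num) _
  have hxε : x < ε := by
    have h1 : x ≤ (1/2:ℝ) ^ n := by
      rw [hx_def, one_div, inv_pow, ← zpow_natCast (2:ℝ) n, ← zpow_neg]
      exact zpow_le_zpow_right₀ one_le_two (by omega)
    linarith
  have hxU : x ∈ U := hball (by
    simp only [Metric.mem_ball, Real.dist_eq, sub_zero, abs_of_pos hxpos]
    exact hxε)
  have hmemP : ∀ t : ℝ, x < t → t < hi → t ∈ Pset := fun t h1 h2 => ⟨n, h1, h2⟩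
  refine ⟨x, hxU, ne_of_gt hxpos, ⟨Set.Ioo lo hi, isOpen_Ioo, ⟨hlx, hxh⟩, ?_⟩, ?_, ?_⟩
  · rintro y ⟨⟨hy1, hy2⟩, hy3⟩
    rcases lt_or_gt_of_ne (fun h => hy3 h) with h | h
    · right
      exact interior_maximal (fun t ht => gap_not_mem n ht.1 ht.2) isOpen_Ioo ⟨hy1, h⟩
    · left
      exact interior_maximal (fun t ht => hmemP t ht.1 ht.2) isOpen_Ioo ⟨h, hy2⟩
  · intro V hV hxV hsub
    obtain ⟨δ, hδ, hballV⟩ := Metric.isOpen_iff.mp hV x hxV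
    set y : ℝ := max (x - δ/2) ((lo + x)/2) with hy_def
    have hy1 : lo < y := lt_max_of_lt_right (by linarith)
    have hy2 : y < x := max_lt (by linarith) (by linarith)
    have hyV : y ∈ V := hballV (by
      simp only [Metric.mem_ball, Real.dist_eq, abs_sub_lt_iff]
      constructor
      · linarith
      · have := le_max_left (x - δ/2) ((lo + x)/2); linarith)
    exact gap_not_mem n hy1 hy2 (hsub ⟨hyV, ne_of_lt hy2⟩)
  · intro W hW hxW hsub
    obtain ⟨δ, hδ, hballW⟩ := Metric.isOpen_iff.mp hW x hxW
    set y : ℝ := min (x + δ/2) ((x + hi)/2) with hy_def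
    have hy1 : x < y := lt_min (by linarith) (by linarith)
    have hy2 : y < hi := min_lt_of_right_lt (by linarith)
    have hyW : y ∈ W := hballW (by
      simp only [Metric.mem_ball, Real.dist_eq, abs_sub_lt_iff]
      constructor
      · have := min_le_left (x + δ/2) ((x + hi)/2); linarith
      · linarith)
    exact hsub ⟨hyW, ne_of_gt hy1⟩ (hmemP y hy1 hy2)
end

section
/- Semantic equivalence of Kur and Kur_{⊡≠}, direction 1: Let X be a topological space in which the Kuratowski property holds at every point, i.e., for all P ⊆ X and x ∈ X, if x has an open neighborhood U with U \ {x} ⊆ int(P) ∪ int(X \ P) then x has an open neighborhood V with V \ {x} ⊆ P or V \ {x} ⊆ X \ P. Then for all P, Q ⊆ X and x ∈ X: if x ∉ Q, Q ∪ {x} = X, and x ∈ int({z : z ∈ Q → z ∈ int(P) ∪ int(X \ P)}), then x ∈ int({z : z ∈ Q → z ∈ P}) or x ∈ int({z : z ∈ Q → z ∉ P}). -/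
theorem kur_implies_kur_boxdot_neq {X : Type*} [TopologicalSpace X]
    (hKur : ∀ (P : Set X) (x : X),
      (∃ U : Set X, IsOpen U ∧ x ∈ U ∧ U \ {x} ⊆ interior P ∪ interior Pᶜ) →
      ∃ V : Set X, IsOpen V ∧ x ∈ V ∧ (V \ {x} ⊆ P ∨ V \ {x} ⊆ Pᶜ)) :
    ∀ (P Q : Set X) (x : X),
      x ∉ Q → Q ∪ {x} = Set.univ →
      x ∈ interior {z : X | z ∈ Q → z ∈ interior P ∪ interior Pᶜ} →
      x ∈ interior {z : X | z ∈ Q → z ∈ P} ∨ x ∈ interior {z : X | z ∈ Q → z ∉ P} := by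
  intro P Q x hxQ hQx hInt
  have hQeq : ∀ z : X, z ∈ Q ↔ z ≠ x := by
    intro z
    constructor
    · rintro hz rfl; exact hxQ hz
    · intro hz
      have : z ∈ Q ∪ {x} := hQx ▸ Set.mem_univ z
      rcases this with h | h
      · exact h
      · exact absurd h hz
  have hU : ∃ U : Set X, IsOpen U ∧ x ∈ U ∧ U \ {x} ⊆ interior P ∪ interior Pᶜ := by
    refine ⟨interior {z : X | z ∈ Q → z ∈ interior P ∪ interior Pᶜ}, isOpen_interior, hInt, ?_⟩
    rintro z ⟨hz1, hz2⟩
    exact interior_subset hz1 ((hQeq z).2 hz2)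
  obtain ⟨V, hVopen, hxV, hV⟩ := hKur P x hU
  rcases hV with h | h
  · left
    apply mem_interior.2
    refine ⟨V, ?_, hVopen, hxV⟩
    intro z hz hzQ
    exact h ⟨hz, (hQeq z).1 hzQ⟩
  · right
    apply mem_interior.2
    refine ⟨V, ?_, hVopen, hxV⟩
    intro z hz hzQ
    exact h ⟨hz, (hQeq z).1 hzQ⟩
end

section
/- Semantic equivalence of Kur and Kur_{⊡≠}, direction 2: Let X be a topological space such that for all P, Q ⊆ X and x ∈ X: if x ∉ Q, Q ∪ {x} = X, and x ∈ int({z : z ∈ Q → z ∈ int(P) ∪ int(X \ P)}), then x ∈ int({z : z ∈ Q → z ∈ P}) or x ∈ int({z : z ∈ Q → z ∉ P}). Then for all P ⊆ X and x ∈ X: if x has an open neighborhood U with U \ {x} ⊆ int(P) ∪ int(X \ P), then x has an open neighborhood V with V \ {x} ⊆ P or V \ {x} ⊆ X \ P. -/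
theorem kur_boxdot_neq_implies_kur {X : Type*} [TopologicalSpace X]
    (hKur' : ∀ (P Q : Set X) (x : X),
      x ∉ Q → Q ∪ {x} = Set.univ →
      x ∈ interior {z : X | z ∈ Q → z ∈ interior P ∪ interior Pᶜ} →
      x ∈ interior {z : X | z ∈ Q → z ∈ P} ∨ x ∈ interior {z : X | z ∈ Q → z ∉ P}) :
    ∀ (P : Set X) (x : X),
      (∃ U : Set X, IsOpen U ∧ x ∈ U ∧ U \ {x} ⊆ interior P ∪ interior Pᶜ) →
      ∃ V : Set X, IsOpen V ∧ x ∈ V ∧ (V \ {x} ⊆ P ∨ V \ {x} ⊆ Pᶜ) := by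
  intro P x ⟨U, hU, hxU, hUsub⟩
  have hQ := hKur' P ({x}ᶜ) x (by simp) (by ext z; by_cases h : z = x <;> simp [h])
  have hx : x ∈ interior {z : X | z ∈ ({x}ᶜ : Set X) → z ∈ interior P ∪ interior Pᶜ} := by
    refine interior_mono (s := U) ?_ (by rwa [hU.interior_eq])
    intro z hz hne
    exact hUsub ⟨hz, hne⟩
  rcases hQ hx with h | h
  · exact ⟨_, isOpen_interior, h, Or.inl fun z ⟨hz, hne⟩ => interior_subset hz hne⟩
  · exact ⟨_, isOpen_interior, h, Or.inr fun z ⟨hz, hne⟩ => interior_subset hz hne⟩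
end
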